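/- arXiv:2407.04956 — 2 statements merged into one kernel-verified Lean document; each statement's English description precedes it below -/
import Mathlib

section
/- Let p, q be elements of the extended tensor algebra over ℝ^d such that |q^∅| < 1, and let i be a letter. Then the right projection of p⊗(∅-q)^{-1} at i satisfies (p⊗(∅-q)^{-1})|_i = (1/(1-q^∅))·( p|_i + p⊗(∅-q)^{-1}⊗(q|_i) ), where ℓ|_i denotes the element whose coefficient at word v is ℓ^{vi}. -/
open scoped BigOperators

/-- Words over the alphabet `Fin d`. -/
abbrev Word (d : ℕ) := List (Fin d)

/-- The extended tensor algebra over `ℝ^d`, viewed as coefficient functions on words. -/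
abbrev ETA (d : ℕ) := Word d → ℝ

namespace ETA

variable {d : ℕ}

/-- The unit (empty word) element `∅`. -/
noncomputable def unit (d : ℕ) : ETA d := fun v => if v = [] then 1 else 0

/-- Concatenation (tensor) product. -/
noncomputable def concat (p q : ETA d) : ETA d :=
  fun v => ∑ k ∈ Finset.range (v.length + 1), p (v.take k) * q (v.drop k)

/-- Concatenation powers. -/
noncomputable def cpow (p : ETA d) : ℕ → ETA d
  | 0 => unit d
  | n + 1 => concat (cpow p n) p

/-- Shuffle product of two words as a multiset of words. -/
def shuffleW {A : Type*} : List A → List A → Multiset (List A)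
  | [], w => {w}
  | u, [] => {u}
  | a :: u, b :: w =>
      (shuffleW u (b :: w)).map (a :: ·) + (shuffleW (a :: u) w).map (b :: ·)
  termination_by u w => u.length + w.length
  decreasing_by all_goals (simp only [List.length_cons]; omega)

/-- The finset of all words of length `n` over `Fin d`. -/
noncomputable def wordsLen (d n : ℕ) : Finset (Word d) :=
  Finset.image (fun f : Fin n → Fin d => List.ofFn f) Finset.univ

/-- Shuffle product on the extended tensor algebra (coefficient-wise finite sums). -/
noncomputable def shuffle (p q : ETA d) : ETA d :=
  fun v => ∑ k ∈ Finset.range (v.length + 1),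
    ∑ u ∈ wordsLen d k, ∑ w ∈ wordsLen d (v.length - k),
      p u * q w * ((shuffleW u w).count v : ℝ)

/-- Shuffle powers. -/
noncomputable def spow (p : ETA d) : ℕ → ETA d
  | 0 => unit d
  | n + 1 => shuffle (spow p n) p

/-- A linear combination of single letters `Σ_i c i • e_i`. -/
def letters (c : Fin d → ℝ) : ETA d := fun v =>
  match v with
  | [i] => c i
  | _ => 0

/-- A single letter `e_i`. -/
noncomputable def letter (i : Fin d) : ETA d := fun v => if v = [i] then 1 else 0

/-- The resolvent `(∅ - q)⁻¹ = Σ_n q^{⊗n}`, defined coefficient-wise. -/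
noncomputable def res (q : ETA d) : ETA d := fun v => ∑' n, cpow q n v

/-- The shuffle exponential `exp^⧢(b) = Σ_n b^{⧢n}/n!`, defined coefficient-wise. -/
noncomputable def shuexp (b : ETA d) : ETA d := fun v => ∑' n, spow b n v / (Nat.factorial n : ℝ)

/-- Right projection `ℓ|_i`, removing a terminal letter `i`. -/
def proj (p : ETA d) (i : Fin d) : ETA d := fun v => p (v ++ [i])

end ETA

/-!
Write `x = p ⊗ (∅ - q)⁻¹`. The resolvent identity `(∅ - q)⁻¹ = ∅ + (∅ - q)⁻¹ ⊗ q` gives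
`x = p + x ⊗ q`, and the right projection obeys the Leibniz rule
`(ℓ ⊗ q)|_i = ℓ ⊗ (q|_i) + q^∅ ℓ|_i`. Hence `x|_i = p|_i + x ⊗ (q|_i) + q^∅ x|_i`, which is solved
for `x|_i` since `q^∅ ≠ 1`. The resolvent identity needs the coefficient series `∑ₙ (q^{⊗n})^v`
to converge; for fixed `v` they satisfy a linear recurrence with ratio `q^∅`, driven by the
coefficients at shorter words, so `|q^∅| < 1` gives convergence by induction on the length of `v`.
-/

/-- The partial sums `S N` of `|f|` satisfy `S N ≤ |f 0| + |r| * S N + ∑' n, |g n|`. -/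
theorem summable_of_succ_eq_mul_add {f g : ℕ → ℝ} {r : ℝ} (hr : |r| < 1) (hg : Summable g)
    (hf : ∀ n, f (n + 1) = r * f n + g n) : Summable f := by
  have hg' : Summable fun n => |g n| := summable_abs_iff.mpr hg
  set G := ∑' n, |g n|
  refine summable_abs_iff.mp <| summable_of_sum_range_le (c := (|f 0| + G) / (1 - |r|))
    (fun n => abs_nonneg _) fun N => ?_
  have hstep : ∑ n ∈ Finset.range N, |f n| ≤ |f 0| + |r| * ∑ n ∈ Finset.range N, |f n| + G :=
    calc ∑ n ∈ Finset.range N, |f n|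
        ≤ ∑ n ∈ Finset.range (N + 1), |f n| :=
          Finset.sum_le_sum_of_subset_of_nonneg (Finset.range_subset_range.mpr N.le_succ)
            fun _ _ _ => abs_nonneg _
      _ = |f 0| + ∑ n ∈ Finset.range N, |r * f n + g n| := by
          rw [Finset.sum_range_succ', add_comm]; simp only [hf]
      _ ≤ |f 0| + ∑ n ∈ Finset.range N, (|r| * |f n| + |g n|) := by
          gcongr with n; exact (abs_add_le _ _).trans_eq (by rw [abs_mul])
      _ ≤ |f 0| + |r| * ∑ n ∈ Finset.range N, |f n| + G := by
          rw [Finset.sum_add_distrib, ← Finset.mul_sum, add_assoc]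
          gcongr
          exact hg'.sum_le_tsum _ fun n _ => abs_nonneg _
  rw [le_div_iff₀ (by linarith)]
  linarith

namespace ETA

variable {d : ℕ}

theorem concat_unit_right (p : ETA d) : concat p (unit d) = p := by
  funext v
  rw [concat, Finset.sum_eq_single_of_mem v.length (Finset.self_mem_range_succ _)]
  · simp [unit]
  · intro k hk _
    have hd : v.drop k ≠ [] := by
      have := Finset.mem_range.mp hk
      simpa [List.drop_eq_nil_iff] using by omega
    simp [unit, hd]

theorem concat_add_right (p a b : ETA d) : concat p (a + b) = concat p a + concat p b := by
  funext v
  simp [concat, mul_add, Finset.sum_add_distrib]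

theorem concat_assoc (a b c : ETA d) : concat (concat a b) c = concat a (concat b c) := by
  funext v
  set N := v.length
  -- both sides are the sum of `a (v[0,j)) * b (v[j,k)) * c (v[k,N))` over `j ≤ k ≤ N`
  have lhs : concat (concat a b) c v = ∑ k ∈ Finset.range (N + 1), ∑ j ∈ Finset.range (k + 1),
      a (v.take j) * (b ((v.drop j).take (k - j)) * c (v.drop k)) := by
    refine Finset.sum_congr rfl fun k hk => ?_
    have hk : k ≤ N := Nat.lt_succ_iff.mp (Finset.mem_range.mp hk)
    rw [concat, Finset.sum_mul, List.length_take, min_eq_left hk]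
    refine Finset.sum_congr rfl fun j hj => ?_
    have hj : j ≤ k := Nat.lt_succ_iff.mp (Finset.mem_range.mp hj)
    rw [List.take_take, min_eq_left hj, List.drop_take, mul_assoc]
  have rhs : concat a (concat b c) v = ∑ j ∈ Finset.range (N + 1), ∑ m ∈ Finset.range (N - j + 1),
      a (v.take j) * (b ((v.drop j).take m) * c (v.drop (j + m))) := by
    refine Finset.sum_congr rfl fun j _ => ?_
    simp only [concat, Finset.mul_sum, List.length_drop, List.drop_drop]
    rfl
  have swap := Finset.sum_Ico_Ico_comm 0 (N + 1) fun j k =>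
    a (v.take j) * (b ((v.drop j).take (k - j)) * c (v.drop k))
  simp only [Nat.Ico_zero_eq_range] at swap
  rw [lhs, rhs, ← swap]
  refine Finset.sum_congr rfl fun j hj => ?_
  have hj : j ≤ N := Nat.lt_succ_iff.mp (Finset.mem_range.mp hj)
  rw [Finset.sum_Ico_eq_sum_range, show N + 1 - j = N - j + 1 by omega]
  simp only [Nat.add_sub_cancel_left]

/-- Leibniz rule for the right projection: the terminal letter of `v ++ [i]` lies either in the
right factor or, when the right factor is the empty word, in the left one. -/
theorem proj_concat (ℓ q : ETA d) (i : Fin d) :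
    proj (concat ℓ q) i = concat ℓ (proj q i) + q [] • proj ℓ i := by
  funext v
  have hlen : (v ++ [i]).length = v.length + 1 := by simp
  simp only [proj, concat, hlen, Finset.sum_range_succ _ (v.length + 1), Pi.add_apply,
    Pi.smul_apply, smul_eq_mul]
  rw [List.take_of_length_le hlen.le, List.drop_of_length_le hlen.le, mul_comm (q [])]
  congr 1
  refine Finset.sum_congr rfl fun k hk => ?_
  have hk : k ≤ v.length := Nat.lt_succ_iff.mp (Finset.mem_range.mp hk)
  rw [List.take_append_of_le_length hk, List.drop_append_of_le_length hk]

theorem cpow_succ_apply (q : ETA d) (n : ℕ) (v : Word d) :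
    cpow q (n + 1) v = q [] * cpow q n v
      + ∑ k ∈ Finset.range v.length, cpow q n (v.take k) * q (v.drop k) := by
  rw [cpow, concat, Finset.sum_range_succ, List.take_length, List.drop_length, mul_comm, add_comm]

theorem summable_cpow_apply {q : ETA d} (hq : |q []| < 1) (v : Word d) :
    Summable fun n => cpow q n v := by
  induction hv : v.length using Nat.strong_induction_on generalizing v with
  | _ N ih =>
    refine summable_of_succ_eq_mul_add hq (summable_sum fun k hk => ?_) (cpow_succ_apply q · v)
    refine (ih _ ?_ _ rfl).mul_right _
    rw [List.length_take, ← hv]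
    exact min_lt_of_left_lt (Finset.mem_range.mp hk)

theorem res_eq_unit_add_concat {q : ETA d} (hq : |q []| < 1) :
    res q = unit d + concat (res q) q := by
  funext v
  rw [res, (summable_cpow_apply hq v).tsum_eq_zero_add, Pi.add_apply, concat]
  congr 1
  simp only [cpow, concat]
  rw [Summable.tsum_finsetSum fun k _ => (summable_cpow_apply hq _).mul_right _]
  exact Finset.sum_congr rfl fun k _ => tsum_mul_right

end ETA

/-- Projection formula for `p ⊗ (∅-q)⁻¹`:
`(p⊗(∅-q)⁻¹)|_i = (1/(1-q^∅)) • ( p|_i + p⊗(∅-q)⁻¹⊗(q|_i) )`. -/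
theorem proj_concat_res (d : ℕ) (p q : ETA d) (hq : |q []| < 1) (i : Fin d) :
    ETA.proj (ETA.concat p (ETA.res q)) i
      = (1 - q [])⁻¹ •
          (ETA.proj p i + ETA.concat (ETA.concat p (ETA.res q)) (ETA.proj q i)) := by
  open ETA in
  have hx : concat p (res q) = p + concat (concat p (res q)) q := by
    conv_lhs => rw [res_eq_unit_add_concat hq, concat_add_right, concat_unit_right, ← concat_assoc]
  set x := concat p (res q)
  have hproj : proj x i = proj p i + concat x (proj q i) + q [] • proj x i := by
    conv_lhs => rw [hx]
    rw [show proj (p + concat x q) i = proj p i + proj (concat x q) i from rfl, proj_concat,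
      add_assoc]
  have hc : 1 - q [] ≠ 0 := by linarith [(abs_lt.mp hq).2]
  rw [eq_inv_smul_iff₀ hc, sub_smul, one_smul, sub_eq_iff_eq_add]
  exact hproj
end

section
/- Let b = Σ_{i=1}^d b^i e_i be a linear combination of single letters. Then the shuffle exponential exp^{⧢}(b) = Σ_{n≥0} b^{⊗n} has finite A_h-norm: Σ_v |⟨exp^{⧢}(b), v⟩| h_T(v) < ∞, where h_T(v) = C(n(v)+1)^{-1/4}(2T)^{(n(v)+x(v))/2}/√((n(v)+x(v)-1)!). In particular, for d=2 and b = a·e_1 + c·e_2, the double series Σ_{m,k≥0} (k+m)!/(k!m!) · |a|^k |c|^m · C(k+m+1)^{-1/4}(2T)^{k+m/2}/√((2k+m-1)!) converges. -/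
open scoped BigOperators

/-- The dominating function `h_t(v) = C (n+1)^{-1/4} (2t)^{(n+x)/2} / √((n+x-1)!)`,
where `n` is the length of `v` and `x` the number of occurrences of the distinguished
letter `0` (the time letter), with the convention `m! = 1` for `m ≤ 0`. -/
noncomputable def hfun {d : ℕ} [NeZero d] (C t : ℝ) (v : Word d) : ℝ :=
  C * ((v.length : ℝ) + 1) ^ (-(1/4 : ℝ)) *
    (2 * t) ^ (((v.length + v.count 0 : ℕ) : ℝ) / 2) /
      Real.sqrt (Nat.factorial (v.length + v.count 0 - 1))

/-!
A combination of single letters `b` has `b^{⧢n}` supported on words of length `n`, with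
coefficient `n! · b^{v₁} ⋯ b^{vₙ}` at `v`: inserting a letter into a word `u` of length `n` by
shuffling produces each word of length `n + 1` once for each of its `n + 1` positions. Hence
`exp^⧢(b)` has coefficient `b^{v₁} ⋯ b^{vₙ}` at `v`, these coefficients have absolute sum
`(Σᵢ |bⁱ|)ⁿ` over words of length `n`, and `h_T(v) ≤ C · max(2T, 1)ⁿ / √((n-1)!)`, while
`Σₙ Kⁿ / √((n-1)!)` converges for every `K`. The two-letter series is dominated in the same way
by a product of two such series, via `(k+m choose k) ≤ 2^{k+m}` and `(k-1)! (m-1)! ≤ (2k+m-1)!`.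
-/

open scoped Nat

namespace ETA

variable {d : ℕ}

theorem mem_wordsLen {u : Word d} {n : ℕ} : u ∈ wordsLen d n ↔ u.length = n := by
  constructor
  · intro hu
    obtain ⟨f, -, rfl⟩ := Finset.mem_image.1 hu
    exact List.length_ofFn
  · rintro rfl
    exact Finset.mem_image.2 ⟨u.get, Finset.mem_univ _, List.ofFn_get u⟩

section SumWordsLen

variable {M : Type*} [AddCommMonoid M]

theorem sum_wordsLen (n : ℕ) (g : Word d → M) :
    ∑ u ∈ wordsLen d n, g u = ∑ f : Fin n → Fin d, g (List.ofFn f) :=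
  Finset.sum_image fun _ _ _ _ h => List.ofFn_inj.1 h

theorem sum_wordsLen_zero (g : Word d → M) : ∑ u ∈ wordsLen d 0, g u = g [] := by
  rw [sum_wordsLen, Fintype.sum_unique]
  rfl

theorem sum_wordsLen_succ (n : ℕ) (g : Word d → M) :
    ∑ u ∈ wordsLen d (n + 1), g u = ∑ c : Fin d, ∑ u ∈ wordsLen d n, g (c :: u) := by
  rw [sum_wordsLen, ← (Fin.consEquiv fun _ : Fin (n + 1) => Fin d).sum_comp,
    Fintype.sum_prod_type]
  simp [sum_wordsLen, Fin.consEquiv, List.ofFn_succ]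

theorem sum_wordsLen_one (g : Word d → M) : ∑ u ∈ wordsLen d 1, g u = ∑ i : Fin d, g [i] := by
  rw [sum_wordsLen_succ 0]
  simp only [sum_wordsLen_zero]

end SumWordsLen

theorem shuffleW_nil_singleton {A : Type*} (i : A) : shuffleW [] [i] = {[i]} := by
  rw [shuffleW]

theorem shuffleW_cons_singleton {A : Type*} (c i : A) (u : List A) :
    shuffleW (c :: u) [i] = (shuffleW u [i]).map (c :: ·) + {[i, c] ++ u} := by
  rw [shuffleW, shuffleW] <;> simp

theorem count_cons_shuffleW_cons_singleton {A : Type*} [DecidableEq A] (a c i : A)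
    (u v : List A) :
    (shuffleW (c :: u) [i]).count (a :: v) =
      (if a = c then (shuffleW u [i]).count v else 0) + if a = i ∧ v = c :: u then 1 else 0 := by
  rw [shuffleW_cons_singleton, Multiset.count_add, Multiset.count_singleton]
  congr 1
  · split_ifs with h
    · subst h
      exact Multiset.count_map_eq_count' _ _ List.cons_injective _
    · refine Multiset.count_eq_zero.2 fun hm => h ?_
      obtain ⟨w, -, hw⟩ := Multiset.mem_map.1 hm
      exact (List.cons.inj hw).1.symm
  · simp

theorem sum_prod_mul_count_shuffleW_singleton (b : Fin d → ℝ) (v : Word d) (n : ℕ)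
    (hv : v.length = n + 1) :
    ∑ u ∈ wordsLen d n, ∑ i, (u.map b).prod * b i * (shuffleW u [i]).count v =
      (n + 1) * (v.map b).prod := by
  induction v generalizing n with
  | nil => simp at hv
  | cons a v ih =>
    rcases n with _ | m
    · obtain rfl : v = [] := List.length_eq_zero_iff.1 (by simpa using hv)
      simp [sum_wordsLen_zero, shuffleW_nil_singleton, Multiset.count_singleton]
    obtain ⟨c₀, v₀, rfl⟩ := List.exists_cons_of_length_eq_add_one (by simpa using hv)
    have hv₀ : v₀ ∈ wordsLen d m := mem_wordsLen.2 (by simpa using hv)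
    have hfirst : ∑ c, ∑ u ∈ wordsLen d m, ∑ i, (b c * (u.map b).prod) * b i *
        (if a = c then ((shuffleW u [i]).count (c₀ :: v₀) : ℝ) else 0) =
          b a * ((m + 1) * ((c₀ :: v₀).map b).prod) := by
      simp only [mul_ite, mul_zero, Finset.sum_ite_irrel, Finset.sum_const_zero,
        Finset.sum_ite_eq, Finset.mem_univ, if_true]
      rw [← ih m (by simpa using hv), Finset.mul_sum]
      refine Finset.sum_congr rfl fun u _ => ?_
      rw [Finset.mul_sum]
      exact Finset.sum_congr rfl fun i _ => by ring
    have hsecond : ∑ c, ∑ u ∈ wordsLen d m, ∑ i, (b c * (u.map b).prod) * b i *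
        (if a = i ∧ c₀ :: v₀ = c :: u then (1 : ℝ) else 0) = b a * ((c₀ :: v₀).map b).prod := by
      simp only [List.cons.injEq, ite_and, mul_ite, mul_one, mul_zero, Finset.sum_ite_irrel,
        Finset.sum_const_zero, Finset.sum_ite_eq, Finset.mem_univ, if_true, if_pos hv₀,
        List.map_cons, List.prod_cons]
      ring
    rw [sum_wordsLen_succ]
    simp only [count_cons_shuffleW_cons_singleton, List.map_cons, List.prod_cons, Nat.cast_add,
      Nat.cast_ite, Nat.cast_zero, Nat.cast_one, mul_add, Finset.sum_add_distrib]
    rw [hfirst, hsecond]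
    simp only [List.map_cons, List.prod_cons]
    ring

theorem letters_of_length_ne_one (b : Fin d → ℝ) {w : Word d} (hw : w.length ≠ 1) :
    letters b w = 0 := by
  match w with
  | [] => rfl
  | [_] => exact absurd rfl hw
  | _ :: _ :: _ => rfl

theorem shuffle_letters_nil (p : ETA d) (b : Fin d → ℝ) : shuffle p (letters b) [] = 0 := by
  simp [shuffle, sum_wordsLen_zero, letters]

theorem shuffle_letters_of_length_eq (p : ETA d) (b : Fin d → ℝ) {v : Word d} {n : ℕ}
    (hv : v.length = n + 1) :
    shuffle p (letters b) v =
      ∑ u ∈ wordsLen d n, ∑ i, p u * b i * (shuffleW u [i]).count v := by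
  rw [shuffle, hv, Finset.sum_eq_single_of_mem n (Finset.mem_range.2 (by omega)),
    Nat.add_sub_cancel_left, Finset.sum_congr rfl fun u _ => sum_wordsLen_one _]
  · rfl
  intro k hk hkn
  refine Finset.sum_eq_zero fun u _ => Finset.sum_eq_zero fun w hw => ?_
  rw [letters_of_length_ne_one b (by rw [mem_wordsLen.1 hw]; rw [Finset.mem_range] at hk; omega)]
  ring

theorem spow_letters (b : Fin d → ℝ) (n : ℕ) (v : Word d) :
    spow (letters b) n v = if v.length = n then (n ! : ℝ) * (v.map b).prod else 0 := by
  induction n generalizing v with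
  | zero =>
    simp only [spow, unit, List.length_eq_zero_iff, Nat.factorial_zero, Nat.cast_one, one_mul]
    split_ifs with h <;> simp [h]
  | succ n ih =>
    rcases v with _ | ⟨a, v⟩
    · simp [spow, shuffle_letters_nil]
    rw [spow, shuffle_letters_of_length_eq _ _ rfl]
    by_cases h : v.length = n
    · subst h
      rw [if_pos (List.length_cons ..), Nat.factorial_succ, Nat.cast_mul, Nat.cast_succ,
        mul_comm (_ + 1 : ℝ), mul_assoc, ← sum_prod_mul_count_shuffleW_singleton b (a :: v) v.length rfl, Finset.mul_sum]
      refine Finset.sum_congr rfl fun u hu => ?_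
      rw [Finset.mul_sum]
      refine Finset.sum_congr rfl fun i _ => ?_
      rw [ih, if_pos (mem_wordsLen.1 hu)]
      ring
    · rw [if_neg (by simpa using h)]
      refine Finset.sum_eq_zero fun u hu => Finset.sum_eq_zero fun i _ => ?_
      rw [ih, if_neg (by rwa [mem_wordsLen.1 hu])]
      ring

theorem shuexp_letters (b : Fin d → ℝ) (v : Word d) : shuexp (letters b) v = (v.map b).prod := by
  rw [shuexp,
    tsum_eq_single v.length fun n hn => by rw [spow_letters, if_neg (Ne.symm hn), zero_div],
    spow_letters, if_pos rfl, mul_div_cancel_left₀ _ (by positivity)]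

end ETA

theorem summable_pow_div_sqrt_factorial (K : ℝ) : Summable fun n : ℕ => K ^ n / √(n ! : ℝ) := by
  -- AM-GM with weight `2ⁿ` bounds the term by an exponential series plus a geometric one
  refine .of_norm_bounded
    (((Real.summable_pow_div_factorial (2 * K ^ 2)).add summable_geometric_two).div_const 2)
    fun n => ?_
  have hfac : (0 : ℝ) < n ! := by positivity
  set x := |K| ^ n / √(n ! : ℝ) with hx
  have hx2 : (2 : ℝ) ^ n * x ^ 2 = (2 * K ^ 2) ^ n / n ! := by
    rw [hx, div_pow, Real.sq_sqrt hfac.le, ← pow_mul, mul_comm n, pow_mul, sq_abs, mul_pow,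
      mul_div_assoc]
  have hamgm : 2 * x ≤ 2 ^ n * x ^ 2 + (1 / 2) ^ n := by
    have ht : (0 : ℝ) < 2 ^ n := by positivity
    rw [one_div_pow, ← sub_nonneg]
    have : 2 ^ n * x ^ 2 + 1 / 2 ^ n - 2 * x = (2 ^ n * x - 1) ^ 2 / 2 ^ n := by
      field_simp
      ring
    rw [this]
    positivity
  rw [norm_div, norm_pow, Real.norm_eq_abs, Real.norm_of_nonneg (Real.sqrt_nonneg _), ← hx]
  linarith

theorem summable_pow_div_sqrt_factorial_pred (K : ℝ) :
    Summable fun n : ℕ => K ^ n / √((n - 1) ! : ℝ) := by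
  rw [← summable_nat_add_iff 1]
  refine ((summable_pow_div_sqrt_factorial K).mul_left K).congr fun n => ?_
  rw [Nat.add_sub_cancel, pow_succ', mul_div_assoc]

theorem summable_of_summable_sum_ofFn {α : Type*} [Fintype α] {f : List α → ℝ}
    (hf : ∀ v, 0 ≤ f v) (h : Summable fun n => ∑ g : Fin n → α, f (List.ofFn g)) :
    Summable f := by
  rw [← List.equivSigmaTuple.symm.summable_iff]
  refine (summable_sigma_of_nonneg fun _ => hf _).2 ⟨fun _ => .of_finite, ?_⟩
  simpa [tsum_fintype] using h

theorem sum_abs_prod_map_ofFn {d : ℕ} (b : Fin d → ℝ) (n : ℕ) :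
    ∑ g : Fin n → Fin d, |((List.ofFn g).map b).prod| = (∑ i, |b i|) ^ n := by
  simp [Fintype.sum_pow, List.map_ofFn, List.prod_ofFn, Finset.abs_prod]

theorem rpow_le_max_one_pow {x e : ℝ} {n : ℕ} (hx : 0 ≤ x) (he : 0 ≤ e) (hen : e ≤ n) :
    x ^ e ≤ max x 1 ^ n :=
  calc x ^ e ≤ max x 1 ^ e := Real.rpow_le_rpow hx (le_max_left _ _) he
    _ ≤ max x 1 ^ (n : ℝ) := Real.rpow_le_rpow_of_exponent_le (le_max_right _ _) hen
    _ = max x 1 ^ n := Real.rpow_natCast _ _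

section Domination

variable {d : ℕ} [NeZero d] {C T : ℝ}

theorem hfun_nonneg (hC : 0 ≤ C) (hT : 0 ≤ T) (v : Word d) : 0 ≤ hfun C T v := by
  unfold hfun
  positivity

theorem hfun_le (hC : 0 ≤ C) (hT : 0 ≤ T) (v : Word d) :
    hfun C T v ≤ C * max (2 * T) 1 ^ v.length / √((v.length - 1) ! : ℝ) := by
  have hcount : (v.count 0 : ℝ) ≤ v.length := by exact_mod_cast List.count_le_length
  have hdecay : ((v.length : ℝ) + 1) ^ (-(1 / 4 : ℝ)) ≤ 1 :=
    Real.rpow_le_one_of_one_le_of_nonpos (by simp) (by norm_num)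
  have hpow : (2 * T) ^ (((v.length + v.count 0 : ℕ) : ℝ) / 2) ≤ max (2 * T) 1 ^ v.length :=
    rpow_le_max_one_pow (by linarith) (by positivity) (by push_cast; linarith)
  have hfac : √((v.length - 1) ! : ℝ) ≤ √((v.length + v.count 0 - 1) ! : ℝ) :=
    Real.sqrt_le_sqrt (by exact_mod_cast Nat.factorial_le (by omega))
  unfold hfun
  gcongr
  exact mul_le_of_le_one_right hC hdecay

theorem summable_abs_prod_map_mul_hfun (hC : 0 ≤ C) (hT : 0 ≤ T) (b : Fin d → ℝ) :
    Summable fun v : Word d => |(v.map b).prod| * hfun C T v := by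
  set M := max (2 * T) 1
  have hdom : Summable fun v : Word d =>
      |(v.map b).prod| * (C * M ^ v.length / √((v.length - 1) ! : ℝ)) := by
    refine summable_of_summable_sum_ofFn (fun v => by positivity) ?_
    simp_rw [List.length_ofFn, ← Finset.sum_mul, sum_abs_prod_map_ofFn]
    refine ((summable_pow_div_sqrt_factorial_pred ((∑ i, |b i|) * M)).mul_left C).congr fun n => ?_
    ring
  exact hdom.of_nonneg_of_le (fun v => mul_nonneg (abs_nonneg _) (hfun_nonneg hC hT v))
    fun v => mul_le_mul_of_nonneg_left (hfun_le hC hT v) (abs_nonneg _)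

theorem two_letter_term_le (hC : 0 ≤ C) (hT : 0 ≤ T) (a c : ℝ) (k m : ℕ) :
    ((k + m) ! : ℝ) / ((k ! : ℝ) * (m ! : ℝ)) * |a| ^ k * |c| ^ m *
        (C * ((k + m + 1 : ℕ) : ℝ) ^ (-(1 / 4 : ℝ)) * (2 * T) ^ ((k : ℝ) + (m : ℝ) / 2) /
          √((2 * k + m - 1) ! : ℝ)) ≤
      C * ((2 * |a| * max (2 * T) 1) ^ k / √((k - 1) ! : ℝ)) *
        ((2 * |c| * max (2 * T) 1) ^ m / √((m - 1) ! : ℝ)) := by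
  have hchoose : ((k + m) ! : ℝ) / ((k ! : ℝ) * (m ! : ℝ)) ≤ 2 ^ (k + m) := by
    rw [← Nat.cast_add_choose]
    exact_mod_cast Nat.choose_le_two_pow _ _
  have hdecay : ((k + m + 1 : ℕ) : ℝ) ^ (-(1 / 4 : ℝ)) ≤ 1 :=
    Real.rpow_le_one_of_one_le_of_nonpos (by exact_mod_cast Nat.le_add_left 1 (k + m)) (by norm_num)
  have hpow : (2 * T) ^ ((k : ℝ) + (m : ℝ) / 2) ≤ max (2 * T) 1 ^ (k + m) :=
    rpow_le_max_one_pow (by linarith) (by positivity)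
      (by push_cast; linarith [m.cast_nonneg (α := ℝ)])
  have hfac : √((k - 1) ! : ℝ) * √((m - 1) ! : ℝ) ≤ √((2 * k + m - 1) ! : ℝ) := by
    rw [← Real.sqrt_mul (by positivity)]
    refine Real.sqrt_le_sqrt ?_
    exact_mod_cast (Nat.le_of_dvd (by positivity)
      (Nat.factorial_mul_factorial_dvd_factorial_add _ _)).trans (Nat.factorial_le (by omega))
  calc _ ≤ (2 : ℝ) ^ (k + m) * |a| ^ k * |c| ^ m *
        (C * 1 * max (2 * T) 1 ^ (k + m) / (√((k - 1) ! : ℝ) * √((m - 1) ! : ℝ))) := by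
        gcongr
    _ = _ := by
        rw [mul_pow, mul_pow, mul_pow, mul_pow, pow_add, pow_add]
        field_simp

theorem summable_two_letter_series (hC : 0 ≤ C) (hT : 0 ≤ T) (a c : ℝ) :
    Summable fun km : ℕ × ℕ =>
      ((km.1 + km.2) ! : ℝ) / ((km.1 ! : ℝ) * (km.2 ! : ℝ)) * |a| ^ km.1 * |c| ^ km.2 *
        (C * ((km.1 + km.2 + 1 : ℕ) : ℝ) ^ (-(1 / 4 : ℝ)) *
          (2 * T) ^ ((km.1 : ℝ) + (km.2 : ℝ) / 2) / √((2 * km.1 + km.2 - 1) ! : ℝ)) := by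
  have hF := (summable_pow_div_sqrt_factorial_pred (2 * |a| * max (2 * T) 1)).mul_left C
  have hG := summable_pow_div_sqrt_factorial_pred (2 * |c| * max (2 * T) 1)
  refine (hF.mul_of_nonneg hG (fun k => ?_) fun m => ?_).of_nonneg_of_le (fun km => ?_)
    fun km => two_letter_term_le hC hT a c km.1 km.2
  all_goals positivity

end Domination

/-- For a linear combination of single letters `b`, the shuffle
exponential `exp^⧢(b)` has finite `A_h`-norm; in particular, for `d = 2` and
`b = a·e_1 + c·e_2`, the corresponding explicit double series converges. -/
theorem shuexp_mem_Ah (d : ℕ) [NeZero d] (C T : ℝ) (hC : 2 ≤ C) (hT : 0 < T)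
    (b : Fin d → ℝ) :
    Summable (fun v : Word d => |ETA.shuexp (ETA.letters b) v| * hfun C T v) ∧
    (∀ a c : ℝ, Summable (fun km : ℕ × ℕ =>
      ((Nat.factorial (km.1 + km.2) : ℝ) /
          ((Nat.factorial km.1 : ℝ) * (Nat.factorial km.2 : ℝ))) *
        |a| ^ km.1 * |c| ^ km.2 *
        (C * ((km.1 + km.2 + 1 : ℕ) : ℝ) ^ (-(1/4 : ℝ)) *
          (2 * T) ^ ((km.1 : ℝ) + (km.2 : ℝ) / 2) /
            Real.sqrt (Nat.factorial (2 * km.1 + km.2 - 1))))) := by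
  have hC₀ : 0 ≤ C := by linarith
  refine ⟨?_, summable_two_letter_series hC₀ hT.le⟩
  simp_rw [ETA.shuexp_letters]
  exact summable_abs_prod_map_mul_hfun hC₀ hT.le b
end
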